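/- Weak equivalence transfers parsers: if A and B are weakly equivalent grammars (there exist parse transformers A → B and B → A), and there is a parser for A — that is, a grammar A¬ disjoint from A together with a function assigning to each string w an element of (A w ⊎ A¬ w) — then there is a parser for B: a grammar disjoint from B together with a function assigning to each w an element of (B w ⊎ (that grammar) w). -/
import Mathlib

/-- Weak equivalence transfers parsers. If `A` and `B` are weakly
equivalent and `A` has a parser (a disjoint negative grammar `Aneg` and a total
function `∀ w, A w ⊎ Aneg w`), then `B` has a parser. -/
theorem weak_equivalence_transfers_parsers {α : Type} (A B : List α → Type)
    (f : ∀ w, A w → B w) (g : ∀ w, B w → A w)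
    (Aneg : List α → Type)
    (hdisj : ∀ w, (A w × Aneg w) → Empty)
    (parse : ∀ w, A w ⊕ Aneg w) :
    ∃ Bneg : List α → Type,
      (∀ w, Nonempty ((B w × Bneg w) → Empty)) ∧ Nonempty (∀ w, B w ⊕ Bneg w) := by
  refine ⟨Aneg, fun w => ⟨fun p => hdisj w ⟨g w p.1, p.2⟩⟩, ⟨fun w => (parse w).map (f w) id⟩⟩
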